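/- The integer 897 cannot be written as a sum of distinct values C(j+3,3) for j ≥ 1, but every integer n > 897 can be. -/

import Mathlib

/-- tetrahedral number -/
def tet (j : ℕ) : ℕ := (j + 3).choose 3

/-- bitset of achievable subset sums of `tet` over indices in `l` -/
def bits : List ℕ → ℕ
  | [] => 1
  | a :: ts => bits ts ||| (bits ts <<< tet a)

lemma testBit_bits : ∀ (l : List ℕ), l.Nodup → ∀ (F : Finset ℕ), F ⊆ l.toFinset →
    (bits l).testBit (∑ j ∈ F, tet j) = true := by
  intro l
  induction l with
  | nil =>
    intro _ F hF
    have : F = ∅ := Finset.subset_empty.mp (by simpa using hF)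
    subst this
    simp [bits]
  | cons a ts ih =>
    intro hnd F hF
    have hand : a ∉ ts := (List.nodup_cons.mp hnd).1
    have hndts : ts.Nodup := (List.nodup_cons.mp hnd).2
    rw [bits, Nat.testBit_or]
    by_cases ha : a ∈ F
    · have hsub : F.erase a ⊆ ts.toFinset := by
        intro j hj
        have hja : j ≠ a := Finset.ne_of_mem_erase hj
        have := hF (Finset.mem_of_mem_erase hj)
        simp only [List.toFinset_cons, Finset.mem_insert] at this
        rcases this with h | h
        · exact absurd h hja
        · exact h
      have hsum : ∑ j ∈ F, tet j = tet a + ∑ j ∈ F.erase a, tet j :=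
        (Finset.add_sum_erase _ _ ha).symm
      have h2 : (bits ts <<< tet a).testBit (∑ j ∈ F, tet j) = true := by
        rw [hsum, Nat.testBit_shiftLeft]
        have : tet a ≤ tet a + ∑ j ∈ F.erase a, tet j := Nat.le_add_right _ _
        simp only [this, decide_true, Bool.true_and, Nat.add_sub_cancel_left]
        exact ih hndts _ hsub
      rw [h2, Bool.or_true]
    · have hsub : F ⊆ ts.toFinset := by
        intro j hj
        have := hF hj
        simp only [List.toFinset_cons, Finset.mem_insert] at this
        rcases this with h | h
        · exact absurd (h ▸ hj) ha
        · exact h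
      rw [ih hndts _ hsub, Bool.true_or]

lemma bits_spec : ∀ (l : List ℕ), l.Nodup → ∀ n : ℕ, (bits l).testBit n = true →
    ∃ F : Finset ℕ, F ⊆ l.toFinset ∧ ∑ j ∈ F, tet j = n := by
  intro l
  induction l with
  | nil =>
    intro _ n h
    have hn : n = 0 := by
      by_contra hne
      cases n with
      | zero => exact hne rfl
      | succ m =>
        rw [bits, Nat.testBit_succ] at h
        norm_num at h
    exact ⟨∅, by simp, by simp [hn]⟩
  | cons a ts ih =>
    intro hnd n h
    have hand : a ∉ ts := (List.nodup_cons.mp hnd).1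
    have hndts : ts.Nodup := (List.nodup_cons.mp hnd).2
    rw [bits, Nat.testBit_or, Bool.or_eq_true] at h
    rcases h with h | h
    · obtain ⟨F, hsub, hsum⟩ := ih hndts n h
      exact ⟨F, fun j hj => by simp [List.toFinset_cons]; right; simpa using hsub hj, hsum⟩
    · rw [Nat.testBit_shiftLeft, Bool.and_eq_true, decide_eq_true_eq] at h
      obtain ⟨hle, h2⟩ := h
      obtain ⟨F, hsub, hsum⟩ := ih hndts _ h2
      have haF : a ∉ F := fun hmem => hand (List.mem_toFinset.mp (hsub hmem))
      refine ⟨insert a F, ?_, ?_⟩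
      · intro j hj
        rcases Finset.mem_insert.mp hj with h | h
        · simp [h]
        · simp [List.toFinset_cons]; right; simpa using hsub h
      · rw [Finset.sum_insert haF, hsum]
        omega

lemma toFinset_range' (s n j : ℕ) : j ∈ (List.range' s n).toFinset ↔ s ≤ j ∧ j < s + n := by
  rw [List.mem_toFinset, List.mem_range'_1]

lemma nodup_range' (s n : ℕ) : (List.range' s n).Nodup := List.nodup_range' (s := s) (n := n)

set_option maxRecDepth 10000 in
lemma base (n : ℕ) (h1 : 898 ≤ n) (h2 : n ≤ 2161) :
    ∃ F : Finset ℕ, F ⊆ Finset.range 15 ∧ (∀ j ∈ F, 1 ≤ j) ∧ ∑ j ∈ F, tet j = n := by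
  have hmask : (bits (List.range' 1 14) >>> 898) &&& (2 ^ 1264 - 1) = 2 ^ 1264 - 1 := by decide
  have key : (bits (List.range' 1 14)).testBit n = true := by
    have h1' : ((bits (List.range' 1 14) >>> 898) &&& (2 ^ 1264 - 1)).testBit (n - 898)
        = (2 ^ 1264 - 1).testBit (n - 898) := by rw [hmask]
    rw [Nat.testBit_and, Nat.testBit_shiftRight, Nat.testBit_two_pow_sub_one] at h1'
    have hlt : n - 898 < 1264 := by omega
    have h898 : 898 + (n - 898) = n := by omega
    simp only [hlt, decide_true, Bool.and_true, h898] at h1'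
    exact h1'
  obtain ⟨F, hsub, hsum⟩ := bits_spec (List.range' 1 14) (nodup_range' 1 14) n key
  refine ⟨F, ?_, ?_, hsum⟩
  · intro j hj
    have := (toFinset_range' 1 14 j).mp (hsub hj)
    exact Finset.mem_range.mpr (by omega)
  · intro j hj
    exact ((toFinset_range' 1 14 j).mp (hsub hj)).1

lemma chooseA : ∀ d : ℕ, 1796 + (d + 18).choose 3 ≤ (d + 18).choose 4 := by
  intro d
  induction d with
  | zero => decide
  | succ d ih =>
    have p3 : (d + 19).choose 3 = (d + 18).choose 2 + (d + 18).choose 3 := by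
      have := Nat.choose_succ_succ (d + 18) 2
      simpa using this
    have p4 : (d + 19).choose 4 = (d + 18).choose 3 + (d + 18).choose 4 := by
      have := Nat.choose_succ_succ (d + 18) 3
      simpa using this
    have h23 : (d + 18).choose 2 ≤ (d + 18).choose 3 :=
      Nat.choose_le_succ_of_lt_half_left (by omega)
    have : d + 19 = d + 1 + 18 := by omega
    rw [this] at p3 p4 ⊢
    omega

lemma chooseM : ∀ n : ℕ, n + 899 ≤ (n + 18).choose 4 := by
  intro n
  induction n with
  | zero => decide
  | succ n ih =>
    have p4 : (n + 19).choose 4 = (n + 18).choose 3 + (n + 18).choose 4 := by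
      have := Nat.choose_succ_succ (n + 18) 3
      simpa using this
    have hpos : 1 ≤ (n + 18).choose 3 := Nat.choose_pos (by omega)
    have : n + 19 = n + 1 + 18 := by omega
    rw [this] at p4
    omega

lemma main : ∀ (d : ℕ) (n : ℕ), 898 ≤ n → n + 899 ≤ (d + 18).choose 4 →
    ∃ F : Finset ℕ, F ⊆ Finset.range (d + 15) ∧ (∀ j ∈ F, 1 ≤ j) ∧ ∑ j ∈ F, tet j = n := by
  intro d
  induction d with
  | zero =>
    intro n h1 h2
    have : n ≤ 2161 := by
      have h18 : (0 + 18 : ℕ).choose 4 = 3060 := by decide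
      omega
    exact base n h1 this
  | succ d ih =>
    intro n h1 h2
    by_cases hc : n + 899 ≤ (d + 18).choose 4
    · obtain ⟨F, hsub, hmin, hsum⟩ := ih n h1 hc
      exact ⟨F, hsub.trans (Finset.range_subset_range.mpr (by omega)), hmin, hsum⟩
    · push_neg at hc
      have hA := chooseA d
      have p4 : (d + 19).choose 4 = (d + 18).choose 3 + (d + 18).choose 4 := by
        have := Nat.choose_succ_succ (d + 18) 3
        simpa using this
      have hT : tet (d + 15) = (d + 18).choose 3 := by
        have h : d + 15 + 3 = d + 18 := by omega
        unfold tet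
        rw [h]
      -- n ≥ choose4 - 898 ≥ 898 + choose3
      have hm1 : 898 ≤ n - tet (d + 15) := by omega
      have hm2 : (n - tet (d + 15)) + 899 ≤ (d + 18).choose 4 := by
        have : d + 1 + 18 = d + 19 := by omega
        rw [this] at h2
        omega
      obtain ⟨F, hsub, hmin, hsum⟩ := ih (n - tet (d + 15)) hm1 hm2
      have hni : d + 15 ∉ F := fun hmem => by
        have := Finset.mem_range.mp (hsub hmem); omega
      refine ⟨insert (d + 15) F, ?_, ?_, ?_⟩
      · intro j hj
        rcases Finset.mem_insert.mp hj with h | h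
        · exact Finset.mem_range.mpr (by omega)
        · exact Finset.mem_range.mpr (by have := Finset.mem_range.mp (hsub h); omega)
      · intro j hj
        rcases Finset.mem_insert.mp hj with h | h
        · omega
        · exact hmin j h
      · rw [Finset.sum_insert hni, hsum]
        omega

theorem lambda_tetrahedral_j1 :
    (¬ ∃ F : Finset ℕ, (∀ j ∈ F, 1 ≤ j) ∧ ∑ j ∈ F, (j + 3).choose 3 = 897) ∧
    (∀ n : ℕ, 897 < n → ∃ F : Finset ℕ,
        (∀ j ∈ F, 1 ≤ j) ∧ ∑ j ∈ F, (j + 3).choose 3 = n) := by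
  constructor
  · rintro ⟨F, hmin, hsum⟩
    have hub : ∀ j ∈ F, j ≤ 15 := by
      intro j hj
      by_contra h
      push_neg at h
      have h1 : tet j ≤ ∑ i ∈ F, tet i :=
        Finset.single_le_sum (fun i _ => Nat.zero_le _) hj
      have h2 : (19 : ℕ).choose 3 ≤ (j + 3).choose 3 := Nat.choose_le_choose 3 (by omega)
      have h3 : (19 : ℕ).choose 3 = 969 := by decide
      have : ∑ i ∈ F, tet i = 897 := hsum
      unfold tet at h1
      omega
    have hsubF : F ⊆ (List.range' 1 15).toFinset := by
      intro j hj
      exact (toFinset_range' 1 15 j).mpr ⟨hmin j hj, by have := hub j hj; omega⟩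
    have h897 : (bits (List.range' 1 15)).testBit 897 = true := by
      have := testBit_bits (List.range' 1 15) (nodup_range' 1 15) F hsubF
      rwa [show ∑ j ∈ F, tet j = 897 from hsum] at this
    have : (bits (List.range' 1 15)).testBit 897 = false := by decide
    rw [this] at h897
    exact absurd h897 (by simp)
  · intro n hn
    by_cases h : n ≤ 2161
    · obtain ⟨F, _, hmin, hsum⟩ := base n (by omega) h
      exact ⟨F, hmin, hsum⟩
    · obtain ⟨F, _, hmin, hsum⟩ := main n n (by omega) (by
        have := chooseM n; omega)
      exact ⟨F, hmin, hsum⟩
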